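/- arXiv:2605.25684 — 2 statements merged into one kernel-verified Lean document; each statement's English description precedes it below -/
import Mathlib

section
/- Let (A,B) be a pair of lower triangular complex matrices satisfying (*2C), E a locally convex Hausdorff topological vector space over ℂ, and T a continuous linear operator on E such that lim_{n→∞} (T − id)(AT)_n x = 0 and lim_{n→∞} (AT)_n (T − id) x = 0 for every x ∈ E. Then lim_{n→∞} (T − id)(BT)_n x = 0 and lim_{n→∞} (BT)_n (T − id) x = 0 for every x ∈ E. -/
open Filter Finset Topology ZeroAtInfty
open scoped ENNReal ComplexOrder

noncomputable section

/-- An infinite matrix of complex numbers, with rows and columns indexed by `ℕ`. -/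
abbrev Mat : Type := ℕ → ℕ → ℂ

/-- `A` is lower triangular: `A n k = 0` whenever `k > n`. -/
def Mat.LowerTri (A : Mat) : Prop := ∀ n k : ℕ, n < k → A n k = 0

/-- The product of two (lower triangular) infinite matrices; for lower triangular
matrices all the sums involved are finite. -/
def Mat.mul (C A : Mat) : Mat := fun n k => ∑ j ∈ Finset.range (n + 1), C n j * A j k

/-- The identity matrix. -/
def Mat.one : Mat := fun n k => if n = k then 1 else 0

/-- The matrix `Δ`, with `Δ n n = 1`, `Δ n (n-1) = -1` (for `n ≥ 1`) and `0` elsewhere. -/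
def Mat.delta : Mat := fun n i => (if n = i then 1 else 0) - (if n = i + 1 then 1 else 0)

/-- The `n`-th absolute row sum `∑_{i=0}^{n} |c_{ni}|` of a lower triangular matrix. -/
def Mat.rowSum (C : Mat) (n : ℕ) : ℝ := ∑ i ∈ Finset.range (n + 1), ‖C n i‖

/-- Property (*C): the absolute row sums of `C` are (uniformly) bounded. -/
def Mat.StarC (C : Mat) : Prop := ∃ K : ℝ, ∀ n : ℕ, C.rowSum n ≤ K

/-- Property (*2C): (*C) together with: every column of `C` tends to `0`. -/
def Mat.Star2C (C : Mat) : Prop :=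
  C.StarC ∧ ∀ i : ℕ, Tendsto (fun n => C n i) atTop (𝓝 (0 : ℂ))

/-- Property (*3C): the absolute row sums of `C` tend to `0`. -/
def Mat.Star3C (C : Mat) : Prop := Tendsto (fun n => C.rowSum n) atTop (𝓝 (0 : ℝ))

/-- The pair `(A, B)` satisfies (*C): there is a lower triangular `C` with `CA = B`
whose absolute row sums are bounded. -/
def PairStarC (A B : Mat) : Prop := ∃ C : Mat, C.LowerTri ∧ Mat.mul C A = B ∧ C.StarC

/-- The pair `(A, B)` satisfies (*2C). -/
def PairStar2C (A B : Mat) : Prop := ∃ C : Mat, C.LowerTri ∧ Mat.mul C A = B ∧ C.Star2C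

/-- The pair `(A, B)` satisfies (*3C). -/
def PairStar3C (A B : Mat) : Prop := ∃ C : Mat, C.LowerTri ∧ Mat.mul C A = B ∧ C.Star3C

/-- A probability matrix: lower triangular, nonnegative (real) entries, rows summing to `1`. -/
def Mat.IsProb (A : Mat) : Prop :=
  A.LowerTri ∧ (∀ n k : ℕ, 0 ≤ A n k) ∧ ∀ n : ℕ, (∑ i ∈ Finset.range (n + 1), A n i) = 1

/-- The action of a lower triangular matrix on a sequence: `(Cx)_n = ∑_{i=0}^n c_{ni} x_i`. -/
def Mat.apply (C : Mat) (x : ℕ → ℂ) (n : ℕ) : ℂ := ∑ i ∈ Finset.range (n + 1), C n i * x i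

section Ops

variable {E : Type*} [AddCommGroup E] [Module ℂ E] [UniformSpace E]
  [IsUniformAddGroup E] [ContinuousSMul ℂ E]

/-- `(A𝒯)_n = ∑_{i=0}^{n} a_{ni} T_i` for a sequence `𝒯` of continuous linear operators. -/
def matOp (A : Mat) (T : ℕ → E →L[ℂ] E) (n : ℕ) : E →L[ℂ] E :=
  ∑ i ∈ Finset.range (n + 1), A n i • T i

/-- The sequence `𝒯` is `A`-bounded: `{(A𝒯)_n : n ∈ ℕ}` is equicontinuous. -/
def MatBounded (A : Mat) (T : ℕ → E →L[ℂ] E) : Prop :=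
  Equicontinuous fun n => ⇑(matOp A T n)

/-- The sequence `𝒯` is `A`-null: `(A𝒯)_n x → 0` for every `x`. -/
def MatNull (A : Mat) (T : ℕ → E →L[ℂ] E) : Prop :=
  ∀ x : E, Tendsto (fun n => matOp A T n x) atTop (𝓝 (0 : E))

/-- The sequence `𝒯` is `A`-ergodic: `(A𝒯)_n` converges pointwise to a continuous
linear operator `P`. -/
def MatErgodic (A : Mat) (T : ℕ → E →L[ℂ] E) : Prop :=
  ∃ P : E →L[ℂ] E, ∀ x : E, Tendsto (fun n => matOp A T n x) atTop (𝓝 (P x))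

/-- `(AT)_n = ∑_{i=0}^{n} a_{ni} T^i` for a single operator `T`. -/
def matOpPow (A : Mat) (T : E →L[ℂ] E) (n : ℕ) : E →L[ℂ] E :=
  matOp A (fun i => T ^ i) n

/-- A single operator `T` is `A`-bounded if the sequence of its powers is. -/
def OpBounded (A : Mat) (T : E →L[ℂ] E) : Prop := MatBounded A fun i => T ^ i

/-- A single operator `T` is `A`-null if the sequence of its powers is. -/
def OpNull (A : Mat) (T : E →L[ℂ] E) : Prop := MatNull A fun i => T ^ i

/-- A single operator `T` is `A`-ergodic if the sequence of its powers is. -/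
def OpErgodic (A : Mat) (T : E →L[ℂ] E) : Prop := MatErgodic A fun i => T ^ i

end Ops

/-- `S(n, p) = ∑_{i=1}^{n} i^p`. -/
def Sp (p : ℝ) (n : ℕ) : ℝ := ∑ i ∈ Finset.range n, ((i : ℝ) + 1) ^ p

/-- The probability matrix `M_p`, reindexed so that rows and columns start at `0`
(entry `(n, i)` here corresponds to entry `(n+1, i+1)` in the paper). -/
def Mp (p : ℝ) : Mat := fun n i =>
  if i ≤ n then ((((i : ℝ) + 1) ^ p / Sp p (n + 1) : ℝ) : ℂ) else 0

/-- The (lower triangular) inverse of `M_p`. -/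
def MpInv (p : ℝ) : Mat := fun n i =>
  if i = n then ((Sp p (n + 1) / ((n : ℝ) + 1) ^ p : ℝ) : ℂ)
  else if i + 1 = n then ((-(Sp p n) / ((n : ℝ) + 1) ^ p : ℝ) : ℂ)
  else 0

/-- The Banach space `ℓ∞` of bounded complex sequences with the sup norm. -/
abbrev ellInf : Type := ↥(lp (fun _ : ℕ => ℂ) ∞)

/-- The Banach space `c₀` of complex sequences tending to `0`, with the sup norm. -/
abbrev czero : Type := C₀(ℕ, ℂ)


section AuxLemmas
open Filter Finset Topology

lemma toeplitz_scalar' (c : Mat) (K : ℝ) (hK : ∀ n, ∑ j ∈ range (n+1), ‖c n j‖ ≤ K)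
    (hcol : ∀ j, Tendsto (fun n => c n j) atTop (𝓝 (0 : ℂ)))
    (a : ℕ → ℝ) (ha0 : ∀ j, 0 ≤ a j) (ha : Tendsto a atTop (𝓝 (0 : ℝ))) :
    Tendsto (fun n => ∑ j ∈ range (n+1), ‖c n j‖ * a j) atTop (𝓝 (0 : ℝ)) := by
  have hK0 : 0 ≤ K :=
    le_trans (Finset.sum_nonneg fun j _ => norm_nonneg _) (hK 0)
  rw [Metric.tendsto_atTop]
  intro ε hε
  set δ := ε / (2 * (K + 1)) with hδdef
  have hδ : 0 < δ := by positivity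
  obtain ⟨N, hN⟩ := Metric.tendsto_atTop.1 ha δ hδ
  have hhead : Tendsto (fun n => ∑ j ∈ range N, ‖c n j‖ * a j) atTop (𝓝 (0 : ℝ)) := by
    have := tendsto_finset_sum (range N)
      (fun j (_ : j ∈ range N) => ((hcol j).norm.mul_const (a j)))
    simpa using this
  obtain ⟨N₂, hN₂⟩ := Metric.tendsto_atTop.1 hhead (ε / 2) (by positivity)
  refine ⟨max N N₂, fun n hn => ?_⟩
  have hNn : N ≤ n + 1 := le_trans (le_max_left _ _) (hn.trans (Nat.le_succ n))
  have hsplit : ∑ j ∈ range (n+1), ‖c n j‖ * a j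
      = ∑ j ∈ range N, ‖c n j‖ * a j + ∑ j ∈ Ico N (n+1), ‖c n j‖ * a j := by
    rw [Finset.range_eq_Ico, ← Finset.sum_Ico_consecutive _ (Nat.zero_le N) hNn, ← Finset.range_eq_Ico]
  have hhead' : ∑ j ∈ range N, ‖c n j‖ * a j < ε / 2 := by
    have := hN₂ n (le_trans (le_max_right _ _) hn)
    rw [Real.dist_eq, sub_zero] at this
    exact lt_of_le_of_lt (le_abs_self _) this
  have htail : ∑ j ∈ Ico N (n+1), ‖c n j‖ * a j ≤ ε / 2 := by
    have h1 : ∑ j ∈ Ico N (n+1), ‖c n j‖ * a j ≤ ∑ j ∈ Ico N (n+1), ‖c n j‖ * δ := by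
      refine Finset.sum_le_sum fun j hj => ?_
      refine mul_le_mul_of_nonneg_left ?_ (norm_nonneg _)
      have := hN j (Finset.mem_Ico.1 hj).1
      rw [Real.dist_eq, sub_zero] at this
      exact (le_abs_self _).trans this.le
    have h2 : ∑ j ∈ Ico N (n+1), ‖c n j‖ ≤ K := by
      refine le_trans (Finset.sum_le_sum_of_subset_of_nonneg ?_
        (fun j _ _ => norm_nonneg _)) (hK n)
      rw [Finset.range_eq_Ico]
      exact Finset.Ico_subset_Ico (Nat.zero_le _) le_rfl
    calc ∑ j ∈ Ico N (n+1), ‖c n j‖ * a j ≤ (∑ j ∈ Ico N (n+1), ‖c n j‖) * δ := by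
          rw [Finset.sum_mul]; exact h1
      _ ≤ K * δ := mul_le_mul_of_nonneg_right h2 hδ.le
      _ ≤ (K + 1) * δ := mul_le_mul_of_nonneg_right (by linarith) hδ.le
      _ = ε / 2 := by rw [hδdef]; field_simp
  have hnn : 0 ≤ ∑ j ∈ range (n+1), ‖c n j‖ * a j :=
    Finset.sum_nonneg fun j _ => mul_nonneg (norm_nonneg _) (ha0 j)
  rw [Real.dist_eq, sub_zero, abs_of_nonneg hnn, hsplit]
  linarith

lemma seminorm_sum_le' {E : Type*} [AddCommGroup E] [Module ℂ E] (p : Seminorm ℂ E)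
    (s : Finset ℕ) (f : ℕ → E) : p (∑ j ∈ s, f j) ≤ ∑ j ∈ s, p (f j) := by
  induction s using Finset.cons_induction with
  | empty => simp
  | cons j s hj ih =>
    rw [Finset.sum_cons, Finset.sum_cons]
    exact (map_add_le_add p _ _).trans (add_le_add le_rfl ih)

lemma vecToeplitz' {E : Type*} [AddCommGroup E] [Module ℂ E] [UniformSpace E]
    [IsUniformAddGroup E] [ContinuousSMul ℂ E] [LocallyConvexSpace ℝ E]
    (c : Mat) (hC : c.Star2C) (y : ℕ → E) (hy : Tendsto y atTop (𝓝 (0 : E))) :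
    Tendsto (fun n => ∑ j ∈ range (n+1), c n j • y j) atTop (𝓝 (0 : E)) := by
  haveI : ContinuousSMul ℝ E := IsScalarTower.continuousSMul ℂ
  haveI : LocallyConvexSpace ℂ E := by
    rw [locallyConvexSpace_iff_exists_convex_subset_zero]
    intro U hU
    obtain ⟨S, hS, hSc, hSU⟩ :=
      (locallyConvexSpace_iff_exists_convex_subset_zero ℝ E).1 inferInstance U hU
    refine ⟨S, hS, ?_, hSU⟩
    intro x hx y hy a b ha hb hab
    have ha' : a = (a.re : ℂ) :=
      Complex.ext (by simp) (by simpa using (Complex.nonneg_iff.1 ha).2.symm)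
    have hb' : b = (b.re : ℂ) :=
      Complex.ext (by simp) (by simpa using (Complex.nonneg_iff.1 hb).2.symm)
    have hab' : a.re + b.re = 1 := by simpa using congrArg Complex.re hab
    rw [ha', hb', Complex.coe_smul, Complex.coe_smul]
    exact hSc hx hy (Complex.nonneg_iff.1 ha).1 (Complex.nonneg_iff.1 hb).1 hab'
  have hw : WithSeminorms (gaugeSeminormFamily ℂ E) := with_gaugeSeminormFamily
  rw [hw.tendsto_nhds]
  intro i ε hε
  set p := gaugeSeminormFamily ℂ E i with hp
  obtain ⟨⟨K, hK⟩, hcol⟩ := hC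
  have hpy : Tendsto (fun j => p (y j)) atTop (𝓝 (0 : ℝ)) := by
    have := ((hw.continuous_seminorm i).tendsto 0).comp hy
    simpa [hp, Function.comp_def] using this
  have key := toeplitz_scalar' c K hK hcol (fun j => p (y j))
    (fun j => apply_nonneg p _) hpy
  filter_upwards [key.eventually_lt_const hε] with n hn
  rw [sub_zero]
  refine lt_of_le_of_lt ?_ hn
  refine le_trans (seminorm_sum_le' p _ _) ?_
  refine Finset.sum_le_sum fun j _ => ?_
  rw [map_smul_eq_mul]

lemma matOpPow_mul' {E : Type*} [AddCommGroup E] [Module ℂ E] [UniformSpace E]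
    [IsUniformAddGroup E] [ContinuousSMul ℂ E]
    (C A : Mat) (hA : A.LowerTri) (T : E →L[ℂ] E) (n : ℕ) :
    matOpPow (Mat.mul C A) T n = ∑ j ∈ Finset.range (n+1), C n j • matOpPow A T j := by
  simp only [matOpPow, matOp, Mat.mul]
  have h1 : ∀ i ∈ range (n+1),
      ((∑ j ∈ range (n+1), C n j * A j i) • (T ^ i : E →L[ℂ] E))
        = ∑ j ∈ range (n+1), (C n j * A j i) • (T ^ i : E →L[ℂ] E) :=
    fun i _ => Finset.sum_smul
  rw [Finset.sum_congr rfl h1, Finset.sum_comm]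
  refine Finset.sum_congr rfl fun j hj => ?_
  rw [Finset.smul_sum]
  simp only [smul_smul]
  refine (Finset.sum_subset
    (Finset.range_subset_range.2 (Nat.succ_le_succ (Finset.mem_range_succ_iff.1 hj)))
    (fun i _ hi => ?_)).symm
  rw [hA j i (by simpa [Nat.lt_succ_iff, not_le] using fun h => hi (Finset.mem_range.2 (Nat.lt_succ_of_le h)) ), mul_zero, zero_smul]

end AuxLemmas

/-- If the pair `(A, B)` satisfies (*2C) and `T` satisfies `(T - id)(AT)_n x → 0` and
`(AT)_n (T - id) x → 0` for every `x`, then also `(T - id)(BT)_n x → 0` and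
`(BT)_n (T - id) x → 0` for every `x`. -/
theorem statement15 {E : Type*} [AddCommGroup E] [Module ℂ E] [UniformSpace E]
    [IsUniformAddGroup E] [ContinuousSMul ℂ E] [LocallyConvexSpace ℝ E] [T2Space E]
    (A B : Mat) (hA : A.LowerTri) (hB : B.LowerTri) (h2C : PairStar2C A B)
    (T : E →L[ℂ] E)
    (h1 : ∀ x : E,
      Tendsto (fun n => T (matOpPow A T n x) - matOpPow A T n x) atTop (𝓝 (0 : E)))
    (h2 : ∀ x : E, Tendsto (fun n => matOpPow A T n (T x - x)) atTop (𝓝 (0 : E))) :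
    (∀ x : E,
      Tendsto (fun n => T (matOpPow B T n x) - matOpPow B T n x) atTop (𝓝 (0 : E))) ∧
    (∀ x : E, Tendsto (fun n => matOpPow B T n (T x - x)) atTop (𝓝 (0 : E))) := by
  obtain ⟨C, hCtri, hCA, hC2⟩ := h2C
  have hBrep : ∀ n, matOpPow B T n = ∑ j ∈ Finset.range (n+1), C n j • matOpPow A T j := by
    intro n; rw [← hCA]; exact matOpPow_mul' C A hA T n
  constructor
  · intro x
    have hrw : ∀ n, T (matOpPow B T n x) - matOpPow B T n x
        = ∑ j ∈ Finset.range (n+1),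
            C n j • (T (matOpPow A T j x) - matOpPow A T j x) := by
      intro n
      rw [hBrep n]
      simp [ContinuousLinearMap.sum_apply, ContinuousLinearMap.smul_apply, map_sum,
        map_smul, smul_sub, Finset.sum_sub_distrib]
    simp only [hrw]
    exact vecToeplitz' C hC2 _ (h1 x)
  · intro x
    have hrw : ∀ n, matOpPow B T n (T x - x)
        = ∑ j ∈ Finset.range (n+1), C n j • (matOpPow A T j (T x - x)) := by
      intro n
      rw [hBrep n]
      simp [ContinuousLinearMap.sum_apply, ContinuousLinearMap.smul_apply]
    simp only [hrw]
    exact vecToeplitz' C hC2 _ (h2 x)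
end
end

section
/- Let E be a locally convex Hausdorff topological vector space over ℂ and T a continuous linear operator on E. Then the following are equivalent: (i) T is Cesàro bounded, i.e. M_0-bounded; (ii) T is M_p-bounded for some p > −1; (iii) T is M_p-bounded for all p > −1. -/
open Filter Finset Topology ZeroAtInfty
open scoped ENNReal ComplexOrder

noncomputable section

/-! ### Auxiliary lemmas -/

section SpLemmas

lemma Sp_succ' (p : ℝ) (m : ℕ) : Sp p (m + 1) = Sp p m + ((m : ℝ) + 1) ^ p :=
  Finset.sum_range_succ _ _

lemma Sp_pos (p : ℝ) (n : ℕ) : 0 < Sp p (n + 1) :=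
  Finset.sum_pos (fun i _ => Real.rpow_pos_of_pos (by positivity) p)
    Finset.nonempty_range_add_one

lemma Sp_nonneg (p : ℝ) (m : ℕ) : 0 ≤ Sp p m :=
  Finset.sum_nonneg fun i _ => (Real.rpow_pos_of_pos (by positivity) p).le

lemma Sp_zero (m : ℕ) : Sp 0 m = m := by
  simp [Sp]

lemma rpow_mvt (r : ℝ) {a : ℝ} (ha : 0 ≤ a) (h : a ≠ 0 ∨ 0 < r) :
    ∃ c ∈ Set.Ioo a (a + 1), (a + 1) ^ r - a ^ r = r * c ^ (r - 1) := by
  have hcont : ContinuousOn (fun x : ℝ => x ^ r) (Set.Icc a (a + 1)) := by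
    intro x hx
    refine (Real.continuousAt_rpow_const x r ?_).continuousWithinAt
    rcases h with h | h
    · exact Or.inl (ne_of_gt (lt_of_lt_of_le (lt_of_le_of_ne ha (Ne.symm h)) hx.1))
    · exact Or.inr h.le
  have hderiv : ∀ x ∈ Set.Ioo a (a + 1),
      HasDerivAt (fun x : ℝ => x ^ r) (r * x ^ (r - 1)) x := by
    intro x hx
    exact Real.hasDerivAt_rpow_const (Or.inl (ne_of_gt (lt_of_le_of_lt ha hx.1)))
  obtain ⟨c, hc, heq⟩ := exists_hasDerivAt_eq_slope _ _ (by linarith : a < a + 1) hcont hderiv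
  refine ⟨c, hc, ?_⟩
  have h1 : a + 1 - a = 1 := by ring
  rw [h1, div_one] at heq
  exact heq.symm

lemma abs_rpow_succ_sub (s : ℝ) (hs : s ≤ 1) {a : ℝ} (ha : 0 < a) :
    |(a + 1) ^ s - a ^ s| ≤ |s| * a ^ (s - 1) := by
  obtain ⟨c, hc, heq⟩ := rpow_mvt s ha.le (Or.inl (ne_of_gt ha))
  rw [heq, abs_mul, abs_of_nonneg (Real.rpow_nonneg (ha.trans hc.1).le _)]
  exact mul_le_mul_of_nonneg_left
    (Real.rpow_le_rpow_of_nonpos ha hc.1.le (by linarith)) (abs_nonneg s)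

lemma rpow_succ_sub_le (r : ℝ) (hr : 1 ≤ r) {a : ℝ} (ha : 0 ≤ a) :
    (a + 1) ^ r - a ^ r ≤ r * (a + 1) ^ (r - 1) := by
  obtain ⟨c, hc, heq⟩ := rpow_mvt r ha (Or.inr (by linarith))
  rw [heq]
  exact mul_le_mul_of_nonneg_left
    (Real.rpow_le_rpow (ha.trans hc.1.le) hc.2.le (by linarith)) (by linarith)

lemma rpow_succ_sub_ge (r : ℝ) (hr0 : 0 < r) (hr : r ≤ 1) {a : ℝ} (ha : 0 ≤ a) :
    r * (a + 1) ^ (r - 1) ≤ (a + 1) ^ r - a ^ r := by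
  obtain ⟨c, hc, heq⟩ := rpow_mvt r ha (Or.inr hr0)
  rw [heq]
  exact mul_le_mul_of_nonneg_left
    (Real.rpow_le_rpow_of_nonpos (lt_of_le_of_lt ha hc.1) hc.2.le (by linarith)) hr0.le

lemma Sp_lower (p : ℝ) (hp : 0 ≤ p) (m : ℕ) :
    ((m : ℝ)) ^ (p + 1) ≤ (p + 1) * Sp p m := by
  induction m with
  | zero => simp [Sp, Real.zero_rpow (by linarith : p + 1 ≠ 0)]
  | succ m ih =>
    have h := rpow_succ_sub_le (p + 1) (by linarith) (Nat.cast_nonneg m : (0:ℝ) ≤ m)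
    have h2 : p + 1 - 1 = p := by ring
    rw [h2] at h
    rw [Sp_succ']
    push_cast
    rw [mul_add]
    linarith

lemma Sp_upper_neg (p : ℝ) (hp0 : -1 < p) (hp : p < 0) (m : ℕ) :
    (p + 1) * Sp p m ≤ ((m : ℝ)) ^ (p + 1) := by
  induction m with
  | zero => simp [Sp, Real.zero_rpow (by linarith : p + 1 ≠ 0)]
  | succ m ih =>
    have h := rpow_succ_sub_ge (p + 1) (by linarith) (by linarith) (Nat.cast_nonneg m : (0:ℝ) ≤ m)
    have h2 : p + 1 - 1 = p := by ring
    rw [h2] at h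
    rw [Sp_succ']
    push_cast
    rw [mul_add]
    linarith

lemma Sp_upper_pos (p : ℝ) (hp : 0 ≤ p) (k : ℕ) :
    Sp p (k + 1) ≤ ((k : ℝ) + 1) ^ (p + 1) := by
  have h : ∀ i ∈ Finset.range (k + 1), ((i : ℝ) + 1) ^ p ≤ ((k : ℝ) + 1) ^ p := by
    intro i hi
    refine Real.rpow_le_rpow (by positivity) ?_ hp
    have h2 : (i : ℝ) ≤ k := Nat.cast_le.mpr (Finset.mem_range_succ_iff.mp hi)
    linarith
  calc Sp p (k + 1) ≤ ∑ _i ∈ Finset.range (k + 1), ((k : ℝ) + 1) ^ p :=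
        Finset.sum_le_sum h
    _ = ((k : ℝ) + 1) * ((k : ℝ) + 1) ^ p := by
        rw [Finset.sum_const, Finset.card_range, nsmul_eq_mul]
        push_cast
        ring
    _ = ((k : ℝ) + 1) ^ (p + 1) := by
        rw [Real.rpow_add_one (by positivity) p]
        ring

lemma abel_id (f : ℕ → ℝ) (n : ℕ) :
    ∑ k ∈ Finset.range n, (f (k + 1) - f k) * ((k : ℝ) + 1)
      = n * f n - ∑ k ∈ Finset.range n, f k := by
  induction n with
  | zero => simp
  | succ n ih =>
    rw [Finset.sum_range_succ, ih, Finset.sum_range_succ]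
    push_cast
    ring

lemma telescope_Ico (g : ℕ → ℝ) {i n : ℕ} (h : i ≤ n) :
    ∑ k ∈ Finset.Ico i n, (g k - g (k + 1)) = g i - g n := by
  induction n, h using Nat.le_induction with
  | base => simp
  | succ n hn ih => rw [Finset.sum_Ico_succ_top hn, ih]; ring

end SpLemmas

/-! ### The transfer coefficients -/

/-- auxiliary weights -/
def vv (p q : ℝ) (n i : ℕ) : ℝ := ((i : ℝ) + 1) ^ (q - p) / Sp q (n + 1)

/-- transfer coefficients expressing row `n` of `M_q` in terms of rows of `M_p` -/
def cc (p q : ℝ) (n k : ℕ) : ℝ :=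
  if k < n then (vv p q n k - vv p q n (k + 1)) * Sp p (k + 1)
  else if k = n then vv p q n n * Sp p (n + 1) else 0

lemma vv_nonneg (p q : ℝ) (n i : ℕ) : 0 ≤ vv p q n i := by
  have := Sp_pos q n
  unfold vv
  positivity

lemma cc_row (p q : ℝ) {i n : ℕ} (hin : i ≤ n) :
    ∑ k ∈ Finset.range (n + 1),
        cc p q n k * (if i ≤ k then ((i : ℝ) + 1) ^ p / Sp p (k + 1) else 0)
      = ((i : ℝ) + 1) ^ q / Sp q (n + 1) := by
  have hsub : Finset.Ico i (n + 1) ⊆ Finset.range (n + 1) := by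
    intro k hk
    simp only [Finset.mem_Ico] at hk
    exact Finset.mem_range.mpr hk.2
  rw [← Finset.sum_subset hsub (by
    intro k hk hk2
    simp only [Finset.mem_Ico, Finset.mem_range, not_and, not_le] at hk hk2
    have : ¬ i ≤ k := by omega
    rw [if_neg this, mul_zero])]
  rw [Finset.sum_Ico_succ_top (by omega : i ≤ n)]
  have hlast : cc p q n n * (if i ≤ n then ((i : ℝ) + 1) ^ p / Sp p (n + 1) else 0)
      = vv p q n n * ((i : ℝ) + 1) ^ p := by
    rw [if_pos hin]
    unfold cc
    rw [if_neg (lt_irrefl n), if_pos rfl]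
    have := (Sp_pos p n).ne'
    field_simp
  have hmain : ∀ k ∈ Finset.Ico i n,
      cc p q n k * (if i ≤ k then ((i : ℝ) + 1) ^ p / Sp p (k + 1) else 0)
        = (vv p q n k - vv p q n (k + 1)) * ((i : ℝ) + 1) ^ p := by
    intro k hk
    simp only [Finset.mem_Ico] at hk
    rw [if_pos hk.1]
    unfold cc
    rw [if_pos hk.2]
    have := (Sp_pos p k).ne'
    field_simp
  rw [Finset.sum_congr rfl hmain, hlast, ← Finset.sum_mul, telescope_Ico _ hin]
  have : (vv p q n i - vv p q n n) * ((i : ℝ) + 1) ^ p + vv p q n n * ((i : ℝ) + 1) ^ p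
      = vv p q n i * ((i : ℝ) + 1) ^ p := by ring
  rw [this]
  unfold vv
  rw [div_mul_eq_mul_div, ← Real.rpow_add (by positivity : (0:ℝ) < (i : ℝ) + 1)]
  norm_num



/-! ### Row sum bounds for the transfer coefficients -/

lemma sum_vv_self (q : ℝ) (n : ℕ) :
    ∑ k ∈ Finset.range (n + 1), vv 0 q n k = 1 := by
  unfold vv
  rw [← Finset.sum_div, div_eq_one_iff_eq (Sp_pos q n).ne']
  simp [Sp]

lemma cc_from_zero_bound (q : ℝ) (hq : -1 < q) :
    ∃ K : ℝ, ∀ n, ∑ k ∈ Finset.range (n + 1), |cc 0 q n k| ≤ K := by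
  refine ⟨2 * q + 3, fun n => ?_⟩
  have hSq := Sp_pos q n
  have hvn : 0 ≤ vv 0 q n n := vv_nonneg 0 q n n
  have hsum : ∑ k ∈ Finset.range n, vv 0 q n k = 1 - vv 0 q n n := by
    have h := sum_vv_self q n
    rw [Finset.sum_range_succ] at h
    linarith
  have hlast : |cc 0 q n n| = vv 0 q n n * ((n : ℝ) + 1) := by
    unfold cc
    rw [if_neg (lt_irrefl n), if_pos rfl, Sp_zero,
      abs_of_nonneg (mul_nonneg hvn (by positivity))]
    push_cast
    ring
  rw [Finset.sum_range_succ, hlast]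
  rcases le_or_gt 0 q with hq0 | hq0
  · -- q ≥ 0 : vv is monotone in k
    have hmono : ∀ k, vv 0 q n k ≤ vv 0 q n (k + 1) := by
      intro k
      unfold vv
      apply div_le_div_of_nonneg_right ?_ hSq.le
      apply Real.rpow_le_rpow (by positivity) ?_ (by linarith)
      push_cast
      linarith
    have h1 : ∀ k ∈ Finset.range n, |cc 0 q n k|
        = (vv 0 q n (k + 1) - vv 0 q n k) * ((k : ℝ) + 1) := by
      intro k hk
      unfold cc
      rw [if_pos (Finset.mem_range.mp hk), Sp_zero, abs_mul,
        abs_of_nonpos (by linarith [hmono k] : vv 0 q n k - vv 0 q n (k + 1) ≤ 0),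
        abs_of_nonneg (by positivity : (0:ℝ) ≤ ((k + 1 : ℕ) : ℝ))]
      push_cast
      ring
    rw [Finset.sum_congr rfl h1, abel_id (vv 0 q n) n, hsum]
    -- bound (n+1) * vv 0 q n n ≤ q + 1
    have h2 : ((n : ℝ) + 1) * vv 0 q n n ≤ q + 1 := by
      unfold vv
      rw [mul_div_assoc']
      rw [div_le_iff₀ hSq]
      have h3 := Sp_lower q hq0 (n + 1)
      rw [Real.rpow_add_one (by positivity : ((n + 1 : ℕ) : ℝ) ≠ 0)] at h3
      push_cast at h3 ⊢
      calc ((n:ℝ) + 1) * ((n:ℝ) + 1) ^ (q - 0) = ((n:ℝ) + 1) ^ q * ((n:ℝ) + 1) := by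
            rw [sub_zero]; ring
        _ ≤ (q + 1) * Sp q (n + 1) := h3
    nlinarith [h2]
  · -- -1 < q < 0 : vv is antitone in k
    have hmono : ∀ k, vv 0 q n (k + 1) ≤ vv 0 q n k := by
      intro k
      unfold vv
      apply div_le_div_of_nonneg_right ?_ hSq.le
      apply Real.rpow_le_rpow_of_nonpos (by positivity) ?_ (by linarith)
      push_cast
      linarith
    have h1 : ∀ k ∈ Finset.range n, |cc 0 q n k|
        = (vv 0 q n k - vv 0 q n (k + 1)) * ((k : ℝ) + 1) := by
      intro k hk
      unfold cc
      rw [if_pos (Finset.mem_range.mp hk), Sp_zero, abs_mul,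
        abs_of_nonneg (by linarith [hmono k] : 0 ≤ vv 0 q n k - vv 0 q n (k + 1)),
        abs_of_nonneg (by positivity : (0:ℝ) ≤ ((k + 1 : ℕ) : ℝ))]
      push_cast
      ring
    have habel : ∑ k ∈ Finset.range n, (vv 0 q n k - vv 0 q n (k + 1)) * ((k : ℝ) + 1)
        = (∑ k ∈ Finset.range n, vv 0 q n k) - n * vv 0 q n n := by
      have h := abel_id (vv 0 q n) n
      have h2 : ∑ k ∈ Finset.range n, (vv 0 q n k - vv 0 q n (k + 1)) * ((k : ℝ) + 1)
          = -∑ k ∈ Finset.range n, (vv 0 q n (k + 1) - vv 0 q n k) * ((k : ℝ) + 1) := by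
        rw [← Finset.sum_neg_distrib]
        exact Finset.sum_congr rfl fun k _ => by ring
      rw [h2, h]
      ring
    rw [Finset.sum_congr rfl h1, habel, hsum]
    nlinarith [hvn]

lemma cc_to_zero_bound (p : ℝ) (hp : -1 < p) :
    ∃ K : ℝ, ∀ n, ∑ k ∈ Finset.range (n + 1), |cc p 0 n k| ≤ K := by
  -- a uniform bound Sp p (k+1) ≤ C * (k+1)^(p+1)
  obtain ⟨C, hC1, hC⟩ : ∃ C : ℝ, 1 ≤ C ∧
      ∀ k : ℕ, Sp p (k + 1) ≤ C * ((k : ℝ) + 1) ^ (p + 1) := by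
    rcases le_or_gt 0 p with hp0 | hp0
    · exact ⟨1, le_refl 1, fun k => by rw [one_mul]; exact Sp_upper_pos p hp0 k⟩
    · refine ⟨1 / (p + 1), ?_, fun k => ?_⟩
      · rw [le_div_iff₀ (by linarith)]
        linarith
      · rw [div_mul_eq_mul_div, le_div_iff₀ (by linarith : (0:ℝ) < p + 1), mul_comm]
        have h := Sp_upper_neg p hp hp0 (k + 1)
        push_cast at h
        rw [one_mul]
        linarith
  refine ⟨(|p| + 1) * C, fun n => ?_⟩
  have hC0 : (0:ℝ) ≤ C := by linarith
  have hN : (0:ℝ) < (n : ℝ) + 1 := by positivity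
  have hS0 : Sp 0 (n + 1) = (n : ℝ) + 1 := by rw [Sp_zero]; push_cast; ring
  -- pointwise bound for k < n
  have h1 : ∀ k ∈ Finset.range n, |cc p 0 n k| ≤ |p| * C / ((n : ℝ) + 1) := by
    intro k hk
    have hk' := Finset.mem_range.mp hk
    have hKpos : (0:ℝ) < (k : ℝ) + 1 := by positivity
    unfold cc
    rw [if_pos hk', abs_mul, abs_of_nonneg (Sp_nonneg p (k + 1))]
    have hd : |vv p 0 n k - vv p 0 n (k + 1)|
        ≤ |p| * ((k : ℝ) + 1) ^ (-p - 1) / ((n : ℝ) + 1) := by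
      unfold vv
      rw [hS0, div_sub_div_same, abs_div, abs_of_pos hN]
      apply div_le_div_of_nonneg_right ?_ hN.le
      have := abs_rpow_succ_sub (0 - p) (by linarith) hKpos
      rw [abs_sub_comm] at this
      have hcast : (((k + 1 : ℕ) : ℝ) + 1) = ((k : ℝ) + 1) + 1 := by push_cast; ring
      rw [hcast]
      calc |((k:ℝ) + 1) ^ (0 - p) - (((k:ℝ) + 1) + 1) ^ (0 - p)|
          ≤ |0 - p| * ((k : ℝ) + 1) ^ (0 - p - 1) := this
        _ = |p| * ((k : ℝ) + 1) ^ (-p - 1) := by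
            rw [show (0:ℝ) - p - 1 = -p - 1 by ring, show |(0:ℝ) - p| = |p| by
              rw [zero_sub, abs_neg]]
    calc |vv p 0 n k - vv p 0 n (k + 1)| * Sp p (k + 1)
        ≤ (|p| * ((k : ℝ) + 1) ^ (-p - 1) / ((n : ℝ) + 1))
            * (C * ((k : ℝ) + 1) ^ (p + 1)) := by
          apply mul_le_mul hd (hC k) (Sp_nonneg p (k + 1)) (by positivity)
      _ = |p| * C / ((n : ℝ) + 1)
            * (((k : ℝ) + 1) ^ (-p - 1) * ((k : ℝ) + 1) ^ (p + 1)) := by ring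
      _ = |p| * C / ((n : ℝ) + 1) := by
          rw [← Real.rpow_add hKpos]
          norm_num
  -- last term bound
  have h2 : |cc p 0 n n| ≤ C := by
    unfold cc
    rw [if_neg (lt_irrefl n), if_pos rfl, abs_mul,
      abs_of_nonneg (vv_nonneg p 0 n n), abs_of_nonneg (Sp_nonneg p (n + 1))]
    calc vv p 0 n n * Sp p (n + 1)
        ≤ vv p 0 n n * (C * ((n : ℝ) + 1) ^ (p + 1)) := by
          apply mul_le_mul_of_nonneg_left (hC n) (vv_nonneg p 0 n n)
      _ = C * (((n : ℝ) + 1) ^ (0 - p) * ((n : ℝ) + 1) ^ (p + 1)) / ((n : ℝ) + 1) := by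
          unfold vv
          rw [hS0]
          ring
      _ = C := by
          rw [← Real.rpow_add hN, show (0:ℝ) - p + (p + 1) = 1 by ring, Real.rpow_one]
          field_simp
  rw [Finset.sum_range_succ]
  have h3 : ∑ k ∈ Finset.range n, |cc p 0 n k|
      ≤ (n : ℝ) * (|p| * C / ((n : ℝ) + 1)) := by
    calc ∑ k ∈ Finset.range n, |cc p 0 n k|
        ≤ ∑ _k ∈ Finset.range n, |p| * C / ((n : ℝ) + 1) := Finset.sum_le_sum h1
      _ = (n : ℝ) * (|p| * C / ((n : ℝ) + 1)) := by
          rw [Finset.sum_const, Finset.card_range, nsmul_eq_mul]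
  have h4 : (n : ℝ) * (|p| * C / ((n : ℝ) + 1)) ≤ |p| * C := by
    rw [mul_div_assoc']
    rw [div_le_iff₀ hN]
    have : (0:ℝ) ≤ |p| * C := by positivity
    nlinarith [Nat.cast_nonneg n (α := ℝ)]
  have : (|p| + 1) * C = |p| * C + C := by ring
  rw [this]
  linarith


/-! ### Equicontinuity transfer -/

section Transfer

open scoped Uniformity Pointwise

lemma convex_sum_mem {E : Type*} [AddCommGroup E] [Module ℝ E] {W : Set E}
    (hW : Convex ℝ W) (h0 : (0 : E) ∈ W) (m : ℕ) (t : ℕ → ℝ) (z : ℕ → E)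
    (ht : ∀ k, 0 ≤ t k) (hz : ∀ k ∈ Finset.range m, z k ∈ W)
    (hsum : ∑ k ∈ Finset.range m, t k ≤ 1) :
    (∑ k ∈ Finset.range m, t k • z k) ∈ W := by
  classical
  have key := hW.sum_mem (t := Finset.range (m + 1))
      (w := fun k => if k < m then t k else 1 - ∑ j ∈ Finset.range m, t j)
      (z := fun k => if k < m then z k else 0)
      ?_ ?_ ?_
  · have heq : ∑ k ∈ Finset.range (m + 1),
        (if k < m then t k else 1 - ∑ j ∈ Finset.range m, t j) •
          (if k < m then z k else 0) = ∑ k ∈ Finset.range m, t k • z k := by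
      rw [Finset.sum_range_succ]
      simp only [if_neg (lt_irrefl m), smul_zero, add_zero]
      exact Finset.sum_congr rfl fun k hk => by
        simp [Finset.mem_range.mp hk]
    rwa [heq] at key
  · intro k _
    by_cases h : k < m
    · simpa [h] using ht k
    · simp only [h, if_false]
      linarith
  · rw [Finset.sum_range_succ, if_neg (lt_irrefl m),
      Finset.sum_congr rfl fun k hk => if_pos (Finset.mem_range.mp hk)]
    ring
  · intro k _
    by_cases h : k < m
    · simpa [h] using hz k (Finset.mem_range.mpr h)
    · simpa [h] using h0

variable {E : Type*} [AddCommGroup E] [Module ℂ E] [UniformSpace E]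
  [IsUniformAddGroup E] [ContinuousSMul ℂ E]

lemma equicontinuousAt_zero_of_forall (F : ℕ → E →L[ℂ] E)
    (h : ∀ V ∈ 𝓝 (0 : E), ∃ U ∈ 𝓝 (0 : E), ∀ x ∈ U, ∀ n, F n x ∈ V) :
    EquicontinuousAt (fun n => ⇑(F n)) 0 := by
  intro U hU
  rw [uniformity_eq_comap_nhds_zero E] at hU
  obtain ⟨V, hV, hVU⟩ := hU
  obtain ⟨W, hW, hWV⟩ := h V hV
  filter_upwards [hW] with x hx n
  apply hVU
  show F n x - F n 0 ∈ V
  simpa [map_zero] using hWV x hx n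

lemma forall_of_equicontinuous (F : ℕ → E →L[ℂ] E)
    (hF : Equicontinuous fun n => ⇑(F n)) :
    ∀ V ∈ 𝓝 (0 : E), ∃ U ∈ 𝓝 (0 : E), ∀ x ∈ U, ∀ n, F n x ∈ V := by
  intro V hV
  have hent : {p : E × E | p.2 - p.1 ∈ V} ∈ 𝓤 E := by
    rw [uniformity_eq_comap_nhds_zero E]
    exact preimage_mem_comap hV
  have h := hF 0 _ hent
  rw [Filter.eventually_iff_exists_mem] at h
  obtain ⟨U, hU, hU'⟩ := h
  exact ⟨U, hU, fun x hx n => by simpa [map_zero] using hU' x hx n⟩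

lemma transfer_bounded [LocallyConvexSpace ℝ E]
    (F G : ℕ → E →L[ℂ] E) (c : ℕ → ℕ → ℝ) (K : ℝ)
    (hG : ∀ n x, G n x = ∑ k ∈ Finset.range (n + 1), c n k • F k x)
    (hK : ∀ n, ∑ k ∈ Finset.range (n + 1), |c n k| ≤ K)
    (hF : Equicontinuous fun n => ⇑(F n)) :
    Equicontinuous fun n => ⇑(G n) := by
  have : ContinuousSMul ℝ E := IsScalarTower.continuousSMul ℂ
  have : LocallyConvexSpace ℂ E := by
    refine (locallyConvexSpace_iff_exists_convex_subset_zero ℂ E).2 fun U hU => ?_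
    obtain ⟨S, hS, hSc, hSU⟩ :=
      (locallyConvexSpace_iff_exists_convex_subset_zero ℝ E).1 ‹_› U hU
    refine ⟨S, hS, fun x hx y hy a b ha hb hab => ?_, hSU⟩
    have ha' := Complex.nonneg_iff.1 ha
    have hb' := Complex.nonneg_iff.1 hb
    have hae : a = (a.re : ℂ) := Complex.ext (by simp) (by simp [← ha'.2])
    have hbe : b = (b.re : ℂ) := Complex.ext (by simp) (by simp [← hb'.2])
    rw [hae, hbe, Complex.coe_smul, Complex.coe_smul]
    exact hSc hx hy ha'.1 hb'.1 (by have := congrArg Complex.re hab; simpa using this)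
  refine equicontinuous_of_equicontinuousAt_zero G (equicontinuousAt_zero_of_forall G ?_)
  intro V hV
  obtain ⟨W, ⟨hWn, hWbal, hWconv⟩, hWV⟩ := (nhds_hasBasis_absConvex ℂ E).mem_iff.mp hV
  set K' : ℝ := max K 1 with hK'def
  have hK'1 : (1 : ℝ) ≤ K' := le_max_right _ _
  have hK'0 : (0 : ℝ) < K' := by linarith
  have hW' : ((K'⁻¹ : ℝ) • W) ∈ 𝓝 (0 : E) := by
    rw [set_smul_mem_nhds_zero_iff (inv_ne_zero hK'0.ne')]
    exact hWn
  obtain ⟨U, hU, hUF⟩ := forall_of_equicontinuous F hF _ hW'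
  refine ⟨U, hU, fun x hx n => hWV ?_⟩
  show G n x ∈ W
  rw [hG n x]
  have h0W : (0 : E) ∈ W := mem_of_mem_nhds hWn
  have hzW : ∀ k, ((if 0 ≤ c n k then (K' : ℝ) else -K') • F k x) ∈ W := by
    intro k
    obtain ⟨w, hw, hwe⟩ := hUF x hx k
    have hsign : ((if 0 ≤ c n k then (K' : ℝ) else -K') • F k x)
        = (if 0 ≤ c n k then (1 : ℝ) else -1) • w := by
      rw [← hwe, smul_smul]
      congr 1
      split <;> field_simp
    rw [hsign]
    split
    · rwa [one_smul]
    · have : ((-1 : ℝ) : ℂ) • w ∈ W := by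
        apply hWbal.smul_mem (by norm_num) hw
      rwa [Complex.coe_smul] at this
  have key : ∑ k ∈ Finset.range (n + 1), c n k • F k x
      = ∑ k ∈ Finset.range (n + 1),
          (|c n k| / K') • ((if 0 ≤ c n k then (K' : ℝ) else -K') • F k x) := by
    refine Finset.sum_congr rfl fun k _ => ?_
    rw [smul_smul]
    congr 1
    rcases le_or_gt 0 (c n k) with h | h
    · rw [if_pos h, abs_of_nonneg h]
      field_simp
    · rw [if_neg (not_le.mpr h), abs_of_neg h]
      field_simp
  rw [key]
  refine convex_sum_mem (hWconv.lift (R := ℝ)) h0W _ _ _ (fun k => by positivity)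
    (fun k _ => hzW k) ?_
  rw [← Finset.sum_div]
  rw [div_le_one hK'0]
  exact le_trans (hK n) (le_max_left _ _)

/-! ### The operator identity -/

lemma matOp_apply (A : Mat) (T : ℕ → E →L[ℂ] E) (n : ℕ) (x : E) :
    matOp A T n x = ∑ i ∈ Finset.range (n + 1), A n i • T i x := by
  simp [matOp]

lemma matOpPow_identity (p q : ℝ) (T : E →L[ℂ] E) (n : ℕ) (x : E) :
    matOpPow (Mp q) T n x
      = ∑ k ∈ Finset.range (n + 1), cc p q n k • matOpPow (Mp p) T k x := by
  have hMp0 : ∀ (r : ℝ) (k i : ℕ), k < i → Mp r k i = 0 := by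
    intro r k i h
    simp only [Mp, if_neg (by omega : ¬ i ≤ k)]
  have hMpcast : ∀ (r : ℝ) (k i : ℕ), Mp r k i
      = (((if i ≤ k then ((i : ℝ) + 1) ^ r / Sp r (k + 1) else 0 : ℝ)) : ℂ) := by
    intro r k i
    simp only [Mp]
    split <;> simp
  symm
  calc ∑ k ∈ Finset.range (n + 1), cc p q n k • matOpPow (Mp p) T k x
      = ∑ k ∈ Finset.range (n + 1), ∑ i ∈ Finset.range (n + 1),
          ((cc p q n k : ℂ) * Mp p k i) • ((T ^ i) x) := by
        refine Finset.sum_congr rfl fun k hk => ?_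
        have hkn := Finset.mem_range_succ_iff.mp hk
        rw [show matOpPow (Mp p) T k x
            = ∑ i ∈ Finset.range (k + 1), Mp p k i • (T ^ i) x from
          matOp_apply _ _ _ _]
        rw [Finset.sum_subset (Finset.range_subset_range.mpr (by omega : k + 1 ≤ n + 1)) (by
          intro i _ hi
          rw [hMp0 p k i (by simp only [Finset.mem_range] at hi; omega), zero_smul])]
        rw [Finset.smul_sum]
        refine Finset.sum_congr rfl fun i _ => ?_
        rw [← Complex.coe_smul, smul_smul]
      _ = ∑ i ∈ Finset.range (n + 1),
          (∑ k ∈ Finset.range (n + 1), (cc p q n k : ℂ) * Mp p k i) • (T ^ i) x := by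
        rw [Finset.sum_comm]
        exact Finset.sum_congr rfl fun i _ => (Finset.sum_smul).symm
      _ = ∑ i ∈ Finset.range (n + 1), Mp q n i • (T ^ i) x := by
        refine Finset.sum_congr rfl fun i hi => ?_
        have hin := Finset.mem_range_succ_iff.mp hi
        congr 1
        have hrow := cc_row p q hin
        calc ∑ k ∈ Finset.range (n + 1), (cc p q n k : ℂ) * Mp p k i
            = ((∑ k ∈ Finset.range (n + 1), cc p q n k *
                (if i ≤ k then ((i : ℝ) + 1) ^ p / Sp p (k + 1) else 0) : ℝ) : ℂ) := by
              push_cast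
              refine Finset.sum_congr rfl fun k _ => ?_
              rw [hMpcast p k i]
          _ = ((((i : ℝ) + 1) ^ q / Sp q (n + 1) : ℝ) : ℂ) := by rw [hrow]
          _ = Mp q n i := by rw [hMpcast q n i, if_pos hin]
      _ = matOpPow (Mp q) T n x := (matOp_apply _ _ _ _).symm

lemma transfer_Mp [LocallyConvexSpace ℝ E] (T : E →L[ℂ] E) (p q : ℝ)
    (hbd : ∃ K : ℝ, ∀ n, ∑ k ∈ Finset.range (n + 1), |cc p q n k| ≤ K)
    (hT : OpBounded (Mp p) T) : OpBounded (Mp q) T := by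
  obtain ⟨K, hK⟩ := hbd
  exact transfer_bounded (fun k => matOpPow (Mp p) T k) (fun n => matOpPow (Mp q) T n)
    (cc p q) K (fun n x => matOpPow_identity p q T n x) hK hT

end Transfer

/-- For an operator `T` on a locally convex Hausdorff space the following are
equivalent: (i) `T` is Cesàro bounded (i.e. `M_0`-bounded); (ii) `T` is `M_p`-bounded
for some `p > -1`; (iii) `T` is `M_p`-bounded for all `p > -1`. -/
theorem statement18 {E : Type*} [AddCommGroup E] [Module ℂ E] [UniformSpace E]
    [IsUniformAddGroup E] [ContinuousSMul ℂ E] [LocallyConvexSpace ℝ E] [T2Space E]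
    (T : E →L[ℂ] E) :
    [OpBounded (Mp 0) T,
      ∃ p : ℝ, -1 < p ∧ OpBounded (Mp p) T,
      ∀ p : ℝ, -1 < p → OpBounded (Mp p) T].TFAE := by
  tfae_have 1 → 3 := fun h q hq => transfer_Mp T 0 q (cc_from_zero_bound q hq) h
  tfae_have 3 → 2 := fun h => ⟨0, by norm_num, h 0 (by norm_num)⟩
  tfae_have 2 → 1 := fun ⟨p, hp, h⟩ => transfer_Mp T p 0 (cc_to_zero_bound p hp) h
  tfae_finish
end
end
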